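/- Consecutive strings in the quaternary reflected Gray code differ in exactly one digit, and that digit changes by exactly 1. Precisely, in the list QUAT(n) defined by QUAT(1) = [0,1,2,3] and QUAT(n) = 0·QUAT(n-1) ++ 1·reverse(QUAT(n-1)) ++ 2·QUAT(n-1) ++ 3·reverse(QUAT(n-1)), any two adjacent strings agree in all positions except one, where the digits differ by exactly 1. -/

import Mathlib

/-- The quaternary reflected Gray code as a list of strings (lists of digits,
leftmost digit first). -/
def quatRGC : ℕ → List (List ℕ)
  | 0 => []
  | 1 => [[0], [1], [2], [3]]
  | n + 2 =>
      (quatRGC (n + 1)).map (fun w => 0 :: w) ++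
      (quatRGC (n + 1)).reverse.map (fun w => 1 :: w) ++
      (quatRGC (n + 1)).map (fun w => 2 :: w) ++
      (quatRGC (n + 1)).reverse.map (fun w => 3 :: w)

/-!
Prefixing a digit and reversing both preserve the property that consecutive strings differ in
one digit by one (the relation is symmetric), so each of the four blocks of `QUAT(n)` inherits it
from `QUAT(n-1)`. At each of the three seams the two neighbouring strings have the same tail
(the last, first and last string of `QUAT(n-1)` respectively) and consecutive leading digits.
Seeing `QUAT(1)` as the same recursion applied to the list `[[]]` makes the induction uniform.
-/

def OneDigitStep (u v : List ℕ) : Prop :=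
  u.length = v.length ∧ ∃ i < u.length,
    (∀ j < u.length, j ≠ i → u.getD j 0 = v.getD j 0) ∧
    ((u.getD i 0 : ℤ) - (v.getD i 0 : ℤ)).natAbs = 1

namespace OneDigitStep

theorem symm {u v : List ℕ} (h : OneDigitStep u v) : OneDigitStep v u := by
  obtain ⟨hlen, i, hi, hsame, hdiff⟩ := h
  exact ⟨hlen.symm, i, hlen ▸ hi, fun j hj hji => (hsame j (hlen ▸ hj) hji).symm, by omega⟩

theorem cons {u v : List ℕ} (h : OneDigitStep u v) (d : ℕ) : OneDigitStep (d :: u) (d :: v) := by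
  obtain ⟨hlen, i, hi, hsame, hdiff⟩ := h
  refine ⟨by simp [hlen], i + 1, by simpa using hi, ?_, by simpa using hdiff⟩
  rintro (_ | j) hj hji
  · rfl
  · simpa using hsame j (by simpa using hj) (by omega)

theorem cons_succ (d : ℕ) (w : List ℕ) : OneDigitStep (d :: w) ((d + 1) :: w) := by
  refine ⟨rfl, 0, by simp, ?_, by simp⟩
  rintro (_ | j) _ hj0
  · exact absurd rfl hj0
  · rfl

end OneDigitStep

theorem List.IsChain.map_cons_oneDigitStep {L : List (List ℕ)} (h : L.IsChain OneDigitStep)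
    (d : ℕ) : (L.map (d :: ·)).IsChain OneDigitStep :=
  List.isChain_map _ |>.mpr <| h.imp fun _ _ huv => huv.cons d

theorem List.IsChain.reverse_oneDigitStep {L : List (List ℕ)} (h : L.IsChain OneDigitStep) :
    L.reverse.IsChain OneDigitStep :=
  List.isChain_reverse.mpr <| h.imp fun _ _ huv => huv.symm

theorem Option.forall_mem_map_forall_mem_map {α β : Type*} {R : β → β → Prop} {f g : α → β}
    (o : Option α) (h : ∀ a, R (f a) (g a)) : ∀ x ∈ o.map f, ∀ y ∈ o.map g, R x y := by
  intro _ hx _ hy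
  obtain ⟨a, ha, rfl⟩ := Option.mem_map.mp hx
  obtain ⟨_, ha', rfl⟩ := Option.mem_map.mp hy
  cases Option.mem_unique ha ha'
  exact h a

def reflectPair (d : ℕ) (L : List (List ℕ)) : List (List ℕ) :=
  L.map (d :: ·) ++ L.reverse.map ((d + 1) :: ·)

theorem head?_reflectPair (d : ℕ) (L : List (List ℕ)) :
    (reflectPair d L).head? = L.head?.map (d :: ·) := by
  cases L <;> simp [reflectPair]

theorem getLast?_reflectPair (d : ℕ) (L : List (List ℕ)) :
    (reflectPair d L).getLast? = L.head?.map ((d + 1) :: ·) := by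
  rw [reflectPair, List.getLast?_append, List.getLast?_map, List.getLast?_reverse]
  cases L <;> rfl

theorem isChain_reflectPair {L : List (List ℕ)} (h : L.IsChain OneDigitStep) (d : ℕ) :
    (reflectPair d L).IsChain OneDigitStep := by
  refine List.isChain_append.mpr
    ⟨h.map_cons_oneDigitStep d, h.reverse_oneDigitStep.map_cons_oneDigitStep (d + 1), ?_⟩
  rw [List.getLast?_map, List.head?_map, List.head?_reverse]
  exact Option.forall_mem_map_forall_mem_map _ (OneDigitStep.cons_succ d)

def quatStep (L : List (List ℕ)) : List (List ℕ) :=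
  reflectPair 0 L ++ reflectPair 2 L

theorem isChain_quatStep {L : List (List ℕ)} (h : L.IsChain OneDigitStep) :
    (quatStep L).IsChain OneDigitStep := by
  refine List.isChain_append.mpr ⟨isChain_reflectPair h 0, isChain_reflectPair h 2, ?_⟩
  rw [getLast?_reflectPair, head?_reflectPair]
  exact Option.forall_mem_map_forall_mem_map _ (OneDigitStep.cons_succ 1)

theorem quatRGC_one : quatRGC 1 = quatStep [[]] := rfl

theorem quatRGC_add_two (n : ℕ) : quatRGC (n + 2) = quatStep (quatRGC (n + 1)) := by
  simp [quatRGC, quatStep, reflectPair]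

theorem isChain_quatRGC_succ (n : ℕ) : (quatRGC (n + 1)).IsChain OneDigitStep := by
  induction n with
  | zero => exact quatRGC_one ▸ isChain_quatStep (List.isChain_singleton _)
  | succ n ih => exact quatRGC_add_two n ▸ isChain_quatStep ih

theorem isChain_quatRGC : ∀ n, (quatRGC n).IsChain OneDigitStep
  | 0 => List.isChain_nil
  | n + 1 => isChain_quatRGC_succ n

theorem quatRGC_adjacent_differ_by_one_general (n : ℕ) :
    List.Chain'
      (fun u v => u.length = v.length ∧ ∃ i < u.length,
        (∀ j < u.length, j ≠ i → u.getD j 0 = v.getD j 0) ∧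
        ((u.getD i 0 : ℤ) - (v.getD i 0 : ℤ)).natAbs = 1)
      (quatRGC n) :=
  isChain_quatRGC n

theorem quatRGC_adjacent_differ_by_one (n : ℕ) (hn : 1 ≤ n) :
    List.Chain'
      (fun u v => u.length = v.length ∧ ∃ i < u.length,
        (∀ j < u.length, j ≠ i → u.getD j 0 = v.getD j 0) ∧
        ((u.getD i 0 : ℤ) - (v.getD i 0 : ℤ)).natAbs = 1)
      (quatRGC n) :=
  quatRGC_adjacent_differ_by_one_general n
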